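/- Let A ∈ ℝ^{n×n}, C ∈ ℝ^{p×n}, K̄ ∈ ℝ^{n×p}, and V ∈ ℝ^{p×p} positive definite, and suppose the closed-loop matrix H = A − K̄C satisfies σ̄(H) < 1. Let {y_t} ⊂ ℝᵖ be arbitrary, run the filter x̂_0 = 0, x̂_{t+1} = A x̂_t + K̄(y_t − C x̂_t), and let {x̄_t} ⊂ ℝⁿ be any comparator sequence. Set b = 1/(1 − σ̄(H)²), c = (1 + σ̄(H)²)/(1 − σ̄(H)²)³, and κ = σ̄(V^{1/2} K̄ᵀ K̄ V^{1/2}). Then for every T ≥ 1: Σ_{t=0}^{T−1} ‖x̄_t − x̂_t‖² ≤ 2 b ‖x̄_0‖² + 8 c ( Σ_{t=0}^{T−1} ‖x̄_{t+1} − A x̄_t‖² + κ Σ_{t=0}^{T−1} ‖y_t − C x̄_t‖²_{V⁻¹} ). -/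

import Mathlib

open Matrix
open scoped Matrix.Norms.L2Operator

/-- The positive semidefinite square root, as `Matrix.PosSemidef.sqrt` was defined in the
older Mathlib (removed since). -/
noncomputable def Matrix.PosSemidef.sqrt {n : Type*} [Fintype n] [DecidableEq n]
    {A : Matrix n n ℝ} (hA : A.PosSemidef) : Matrix n n ℝ :=
  hA.1.eigenvectorUnitary.1 * diagonal ((↑) ∘ Real.sqrt ∘ hA.1.eigenvalues) *
    (star hA.1.eigenvectorUnitary : Matrix n n ℝ)

/-- The largest singular value of a real matrix, i.e. its `ℓ²` operator norm. -/
noncomputable def sbar {m n : ℕ} (M : Matrix (Fin m) (Fin n) ℝ) : ℝ := ‖M‖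

noncomputable def eu {k : ℕ} (v : Fin k → ℝ) : EuclideanSpace ℝ (Fin k) :=
  (EuclideanSpace.equiv (Fin k) ℝ).symm v

lemma eu_dot {k : ℕ} (v : Fin k → ℝ) : v ⬝ᵥ v = ‖eu v‖ ^ 2 := by
  rw [eu, EuclideanSpace.norm_eq, Real.sq_sqrt (by positivity)]
  simp [dotProduct, Real.norm_eq_abs, sq_abs, pow_two]

lemma dot_le_norm {k : ℕ} (v w : Fin k → ℝ) : v ⬝ᵥ w ≤ ‖eu v‖ * ‖eu w‖ := by
  have := real_inner_le_norm (eu v) (eu w)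
  rwa [show (inner ℝ (eu v) (eu w) : ℝ) = v ⬝ᵥ w by
    simp [eu, PiLp.inner_apply, dotProduct, mul_comm]] at this

lemma eu_mulVec_le {m k : ℕ} (M : Matrix (Fin m) (Fin k) ℝ) (v : Fin k → ℝ) :
    ‖eu (M *ᵥ v)‖ ≤ ‖M‖ * ‖eu v‖ :=
  M.l2_opNorm_mulVec ((EuclideanSpace.equiv (Fin k) ℝ).symm v)

lemma dot_mulVec_self {m k : ℕ} (M : Matrix (Fin m) (Fin k) ℝ) (x : Fin k → ℝ) :
    (M *ᵥ x) ⬝ᵥ (M *ᵥ x) = x ⬝ᵥ ((Mᵀ * M) *ᵥ x) := by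
  rw [← mulVec_mulVec, dotProduct_mulVec x, ← mulVec_transpose, transpose_transpose,
    dotProduct_comm]

lemma quad_le_norm {k : ℕ} (N : Matrix (Fin k) (Fin k) ℝ) (x : Fin k → ℝ) :
    x ⬝ᵥ (N *ᵥ x) ≤ ‖N‖ * ‖eu x‖ ^ 2 := by
  calc x ⬝ᵥ (N *ᵥ x) ≤ ‖eu x‖ * ‖eu (N *ᵥ x)‖ := dot_le_norm _ _
    _ ≤ ‖eu x‖ * (‖N‖ * ‖eu x‖) :=
        mul_le_mul_of_nonneg_left (eu_mulVec_le _ _) (norm_nonneg _)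
    _ = ‖N‖ * ‖eu x‖ ^ 2 := by ring

lemma psd_sqrt_transpose {p : ℕ} {V : Matrix (Fin p) (Fin p) ℝ} (hV : V.PosSemidef) :
    (hV.sqrt)ᵀ = hV.sqrt := by
  have h : (hV.sqrt)ᴴ = hV.sqrt := by
    simp only [Matrix.PosSemidef.sqrt, conjTranspose_mul, diagonal_conjTranspose,
      Matrix.mul_assoc]
    rw [← Matrix.star_eq_conjTranspose, star_star]
    congr 2
  rwa [conjTranspose_eq_transpose_of_trivial] at h

lemma psd_sqrt_mul_self {p : ℕ} {V : Matrix (Fin p) (Fin p) ℝ} (hV : V.PosSemidef) :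
    hV.sqrt * hV.sqrt = V := by
  have hU : (star hV.1.eigenvectorUnitary : Matrix (Fin p) (Fin p) ℝ) * hV.1.eigenvectorUnitary.1 = 1 :=
    Unitary.coe_star_mul_self _
  have hD : diagonal ((↑) ∘ Real.sqrt ∘ hV.1.eigenvalues) * diagonal ((↑) ∘ Real.sqrt ∘ hV.1.eigenvalues)
      = diagonal (RCLike.ofReal ∘ hV.1.eigenvalues : Fin p → ℝ) := by
    rw [diagonal_mul_diagonal]; congr 1; ext i
    simp [Real.mul_self_sqrt (hV.eigenvalues_nonneg i)]
  conv_rhs => rw [hV.1.spectral_theorem]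
  rw [Unitary.conjStarAlgAut_apply, ← hD]
  simp only [Matrix.PosSemidef.sqrt, Matrix.mul_assoc]
  rw [← Matrix.mul_assoc (star _ : Matrix _ _ ℝ) (hV.1.eigenvectorUnitary.1), hU, Matrix.one_mul]

lemma kappa_facts {n p : ℕ} (K : Matrix (Fin n) (Fin p) ℝ)
    (V : Matrix (Fin p) (Fin p) ℝ) (hV : V.PosDef) (z : Fin p → ℝ) :
    z ⬝ᵥ (V⁻¹ *ᵥ z) = ‖eu (hV.posSemidef.sqrt⁻¹ *ᵥ z)‖ ^ 2 ∧
    (K *ᵥ z) ⬝ᵥ (K *ᵥ z) ≤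
      ‖hV.posSemidef.sqrt * Kᵀ * K * hV.posSemidef.sqrt‖ * (z ⬝ᵥ (V⁻¹ *ᵥ z)) := by
  set S := hV.posSemidef.sqrt with hSdef
  have hSherm : Sᵀ = S := by
    exact psd_sqrt_transpose hV.posSemidef
  have hSS : S * S = V := psd_sqrt_mul_self hV.posSemidef
  have hdet : IsUnit S.det := by
    have hVdet : V.det ≠ 0 := ne_of_gt hV.det_pos
    refine isUnit_iff_ne_zero.mpr fun h => hVdet ?_
    rw [← hSS, det_mul, h, mul_zero]
  have hSinv : S * S⁻¹ = 1 := mul_nonsing_inv S hdet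
  have hVinv : V⁻¹ = S⁻¹ * S⁻¹ := by rw [← hSS, Matrix.mul_inv_rev]
  have hSinvT : (S⁻¹)ᵀ = S⁻¹ := by rw [transpose_nonsing_inv, hSherm]
  set u := S⁻¹ *ᵥ z with hu
  have hz : z = S *ᵥ u := by rw [hu, mulVec_mulVec, hSinv, one_mulVec]
  have h1 : z ⬝ᵥ (V⁻¹ *ᵥ z) = u ⬝ᵥ u := by
    rw [hVinv, ← mulVec_mulVec, ← hu, dotProduct_mulVec,
      ← mulVec_transpose, hSinvT, ← hu, dotProduct_comm]
  constructor
  · rw [h1, eu_dot]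
  · rw [h1]
    have h2 : (K *ᵥ z) ⬝ᵥ (K *ᵥ z) = u ⬝ᵥ ((S * Kᵀ * K * S) *ᵥ u) := by
      rw [hz, mulVec_mulVec, dot_mulVec_self, transpose_mul, hSherm, ← Matrix.mul_assoc]
    rw [h2, eu_dot]
    exact quad_le_norm _ _

lemma key_scalar {h a g x u : ℝ} (hh0 : 0 ≤ h) (hu : u = 1 - h ^ 2) (hupos : 0 < u)
    (hx0 : 0 ≤ x) (hx : x ≤ h * a + g) (ha : 0 ≤ a) :
    2 * u * x ^ 2 ≤ u * (2 - u) * a ^ 2 + 2 * (2 - u) * g ^ 2 := by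
  have hx2 : x ^ 2 ≤ (h * a + g) ^ 2 := by nlinarith
  have h1 : 2 * u * x ^ 2 ≤ 2 * u * (h * a + g) ^ 2 :=
    mul_le_mul_of_nonneg_left hx2 (by positivity)
  subst hu
  nlinarith [h1, sq_nonneg ((1 - h ^ 2) * a - 2 * h * g)]

set_option maxHeartbeats 1000000 in
/-- Bound on the cumulative state estimation error. With closed-loop matrix
`H = A − K̄C` satisfying `σ̄(H) < 1`, the filter `x̂_0 = 0`,
`x̂_{t+1} = A x̂_t + K̄(y_t − C x̂_t)`, and `b = 1/(1 − σ̄(H)²)`,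
`c = (1 + σ̄(H)²)/(1 − σ̄(H)²)³`, `κ = σ̄(V^{1/2} K̄ᵀ K̄ V^{1/2})`, for every `T ≥ 1`:
`Σ_{t<T} ‖x̄_t − x̂_t‖² ≤ 2b‖x̄_0‖² + 8c(Σ_{t<T} ‖x̄_{t+1} − Ax̄_t‖² + κ Σ_{t<T} ‖y_t − Cx̄_t‖²_{V⁻¹})`. -/
theorem cumulative_estimation_error_bound {n p : ℕ}
    (A : Matrix (Fin n) (Fin n) ℝ)
    (C : Matrix (Fin p) (Fin n) ℝ)
    (K : Matrix (Fin n) (Fin p) ℝ)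
    (V : Matrix (Fin p) (Fin p) ℝ) (hV : V.PosDef)
    (hH : sbar (A - K * C) < 1)
    (y : ℕ → Fin p → ℝ)
    (xhat : ℕ → Fin n → ℝ) (hx0 : xhat 0 = 0)
    (hrec : ∀ t : ℕ, xhat (t + 1) =
      A.mulVec (xhat t) + K.mulVec (y t - C.mulVec (xhat t)))
    (xbar : ℕ → Fin n → ℝ)
    (T : ℕ) (hT : 1 ≤ T) :
    (∑ t ∈ Finset.range T, (xbar t - xhat t) ⬝ᵥ (xbar t - xhat t)) ≤
      2 * (1 / (1 - sbar (A - K * C) ^ 2)) * (xbar 0 ⬝ᵥ xbar 0)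
        + 8 * ((1 + sbar (A - K * C) ^ 2) / (1 - sbar (A - K * C) ^ 2) ^ 3) *
            ((∑ t ∈ Finset.range T,
                (xbar (t + 1) - A.mulVec (xbar t)) ⬝ᵥ (xbar (t + 1) - A.mulVec (xbar t)))
              + sbar (hV.posSemidef.sqrt * Kᵀ * K * hV.posSemidef.sqrt) *
                  ∑ t ∈ Finset.range T,
                    (y t - C.mulVec (xbar t)) ⬝ᵥ V⁻¹.mulVec (y t - C.mulVec (xbar t))) := by
  set H := A - K * C with hHdef
  set h := sbar H with hhdef
  have hh0 : 0 ≤ h := norm_nonneg _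
  set u : ℝ := 1 - h ^ 2 with hudef
  have hupos : 0 < u := by rw [hudef]; nlinarith
  have hu1 : u ≤ 1 := by rw [hudef]; nlinarith
  -- error and disturbance sequences
  set e : ℕ → Fin n → ℝ := fun t => xbar t - xhat t with hedef
  set w : ℕ → Fin n → ℝ := fun t =>
    (xbar (t + 1) - A *ᵥ xbar t) - K *ᵥ (y t - C *ᵥ xbar t) with hwdef
  have he : ∀ t, e (t + 1) = H *ᵥ e t + w t := by
    intro t
    simp only [hedef, hwdef, hrec t, hHdef, Matrix.sub_mulVec, Matrix.mulVec_sub,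
      ← Matrix.mulVec_mulVec]
    abel
  -- scalar sequences
  set a : ℕ → ℝ := fun t => ‖eu (e t)‖ with hadef
  set g : ℕ → ℝ := fun t => ‖eu (w t)‖ with hgdef
  have harec : ∀ t, a (t + 1) ≤ h * a t + g t := by
    intro t
    have h1 : a (t + 1) = ‖eu (H *ᵥ e t) + eu (w t)‖ := by
      simp only [hadef, he t]; rfl
    rw [h1]
    calc ‖eu (H *ᵥ e t) + eu (w t)‖ ≤ ‖eu (H *ᵥ e t)‖ + ‖eu (w t)‖ := norm_add_le _ _
      _ ≤ h * a t + g t := add_le_add (eu_mulVec_le _ _) le_rfl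
  have hkey : ∀ t, 2 * u * a (t + 1) ^ 2 ≤
      u * (2 - u) * a t ^ 2 + 2 * (2 - u) * g t ^ 2 := fun t =>
    key_scalar hh0 hudef hupos (norm_nonneg _) (harec t) (norm_nonneg _)
  set S : ℝ := ∑ t ∈ Finset.range T, a t ^ 2 with hSdef
  set G : ℝ := ∑ t ∈ Finset.range T, g t ^ 2 with hGdef
  have hsumrec : 2 * u * (∑ t ∈ Finset.range T, a (t + 1) ^ 2) ≤
      u * (2 - u) * S + 2 * (2 - u) * G := by
    calc 2 * u * (∑ t ∈ Finset.range T, a (t + 1) ^ 2)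
        = ∑ t ∈ Finset.range T, 2 * u * a (t + 1) ^ 2 := Finset.mul_sum _ _ _
      _ ≤ ∑ t ∈ Finset.range T, (u * (2 - u) * a t ^ 2 + 2 * (2 - u) * g t ^ 2) :=
          Finset.sum_le_sum fun t _ => hkey t
      _ = u * (2 - u) * S + 2 * (2 - u) * G := by
          rw [Finset.sum_add_distrib, ← Finset.mul_sum, ← Finset.mul_sum, hSdef, hGdef]
  have hSsplit : S ≤ a 0 ^ 2 + ∑ t ∈ Finset.range T, a (t + 1) ^ 2 := by
    obtain ⟨T', rfl⟩ : ∃ T', T = T' + 1 := ⟨T - 1, by omega⟩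
    rw [hSdef, Finset.sum_range_succ']
    have : (∑ t ∈ Finset.range T', a (t + 1) ^ 2) ≤
        ∑ t ∈ Finset.range (T' + 1), a (t + 1) ^ 2 :=
      Finset.sum_le_sum_of_subset_of_nonneg
        (Finset.range_subset_range.mpr (Nat.le_succ _)) (fun _ _ _ => sq_nonneg _)
    linarith [this]
  have hSbound : u ^ 2 * S ≤ 2 * u * a 0 ^ 2 + 2 * (2 - u) * G := by
    nlinarith [hsumrec, hSsplit, mul_le_mul_of_nonneg_left hSsplit (by positivity : (0:ℝ) ≤ 2 * u)]
  -- identify sums with dot products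
  set κ : ℝ := sbar (hV.posSemidef.sqrt * Kᵀ * K * hV.posSemidef.sqrt) with hκdef
  have hκ0 : 0 ≤ κ := norm_nonneg _
  set D : ℝ := ∑ t ∈ Finset.range T,
    (xbar (t + 1) - A.mulVec (xbar t)) ⬝ᵥ (xbar (t + 1) - A.mulVec (xbar t)) with hDdef
  set M : ℝ := ∑ t ∈ Finset.range T,
    (y t - C.mulVec (xbar t)) ⬝ᵥ V⁻¹.mulVec (y t - C.mulVec (xbar t)) with hMdef
  have hM0 : 0 ≤ M := by
    refine Finset.sum_nonneg fun t _ => ?_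
    rw [(kappa_facts K V hV _).1]; positivity
  have hD0 : 0 ≤ D := Finset.sum_nonneg fun t _ => by rw [eu_dot]; positivity
  have hGbound : G ≤ 2 * (D + κ * M) := by
    have hpt : ∀ t, g t ^ 2 ≤
        2 * ((xbar (t + 1) - A *ᵥ xbar t) ⬝ᵥ (xbar (t + 1) - A *ᵥ xbar t))
          + 2 * (κ * ((y t - C *ᵥ xbar t) ⬝ᵥ (V⁻¹ *ᵥ (y t - C *ᵥ xbar t)))) := by
      intro t
      have hsplit : eu (w t)
          = eu (xbar (t + 1) - A *ᵥ xbar t) - eu (K *ᵥ (y t - C *ᵥ xbar t)) := by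
        simp only [hwdef]; rfl
      have h0 : 0 ≤ g t := by simp only [hgdef]; exact norm_nonneg _
      have h1 : g t ≤ ‖eu (xbar (t + 1) - A *ᵥ xbar t)‖
          + ‖eu (K *ᵥ (y t - C *ᵥ xbar t))‖ := by
        simp only [hgdef]; rw [hsplit]; exact norm_sub_le _ _
      have h2 : ‖eu (K *ᵥ (y t - C *ᵥ xbar t))‖ ^ 2
          ≤ κ * ((y t - C *ᵥ xbar t) ⬝ᵥ (V⁻¹ *ᵥ (y t - C *ᵥ xbar t))) := by
        rw [← eu_dot]; exact (kappa_facts K V hV _).2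
      have h3 : ‖eu (xbar (t + 1) - A *ᵥ xbar t)‖ ^ 2
          = (xbar (t + 1) - A *ᵥ xbar t) ⬝ᵥ (xbar (t + 1) - A *ᵥ xbar t) :=
        (eu_dot _).symm
      nlinarith [h0, h1, h2, h3,
        sq_nonneg (‖eu (xbar (t + 1) - A *ᵥ xbar t)‖
          - ‖eu (K *ᵥ (y t - C *ᵥ xbar t))‖),
        norm_nonneg (eu (xbar (t + 1) - A *ᵥ xbar t)),
        norm_nonneg (eu (K *ᵥ (y t - C *ᵥ xbar t)))]
    calc G = ∑ t ∈ Finset.range T, g t ^ 2 := hGdef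
      _ ≤ ∑ t ∈ Finset.range T,
            (2 * ((xbar (t + 1) - A *ᵥ xbar t) ⬝ᵥ (xbar (t + 1) - A *ᵥ xbar t))
              + 2 * (κ * ((y t - C *ᵥ xbar t) ⬝ᵥ (V⁻¹ *ᵥ (y t - C *ᵥ xbar t))))) :=
          Finset.sum_le_sum fun t _ => hpt t
      _ = 2 * (D + κ * M) := by
          rw [Finset.sum_add_distrib, ← Finset.mul_sum, ← Finset.mul_sum, ← Finset.mul_sum,
            hDdef, hMdef]
          ring
  have hS_eq : (∑ t ∈ Finset.range T, (xbar t - xhat t) ⬝ᵥ (xbar t - xhat t)) = S := by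
    rw [hSdef]; exact Finset.sum_congr rfl fun t _ => by rw [hadef, ← eu_dot]
  have ha0 : a 0 ^ 2 = xbar 0 ⬝ᵥ xbar 0 := by
    rw [hadef, ← eu_dot, hedef]; simp [hx0]
  rw [ha0] at hSbound
  set R : ℝ := xbar 0 ⬝ᵥ xbar 0 with hRdef
  set Y : ℝ := D + κ * M with hYdef
  have hY : 0 ≤ Y := add_nonneg hD0 (mul_nonneg hκ0 hM0)
  clear_value H h u e w a g S G R Y D M κ
  have hfin : u ^ 3 * S ≤ 2 * u ^ 2 * R + 8 * (2 - u) * Y := by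
    have p1 := mul_le_mul_of_nonneg_left hSbound hupos.le
    have p2 := mul_le_mul_of_nonneg_left hGbound
      (by nlinarith : (0:ℝ) ≤ 2 * (2 - u) * u)
    have p3 : 0 ≤ (8 - 4 * u) * Y := mul_nonneg (by nlinarith) hY
    nlinarith [p1, p2, p3]

  have h3 : (0:ℝ) < u ^ 3 := by positivity
  have h1pow : (1 : ℝ) + h ^ 2 = 2 - u := by rw [hudef]; ring
  rw [hS_eq, h1pow]
  calc S = (u ^ 3 * S) / u ^ 3 := by field_simp
    _ ≤ (2 * u ^ 2 * R + 8 * (2 - u) * Y) / u ^ 3 := by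
        exact by gcongr
    _ = 2 * (1 / u) * R + 8 * ((2 - u) / u ^ 3) * Y := by
        have hu0 : u ≠ 0 := ne_of_gt hupos
        field_simp
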